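/- arXiv:2306.09754 — 2 statements merged into one kernel-verified Lean document; each statement's English description precedes it below -/
import Mathlib

section
/- Suppose every collateralized debt position is over-collateralized at time 0: $p_{y_j,0}\, c_{j,0} / D_{j,0} > \gamma$ for all CDPs $j$. Suppose that at time 1 the prices of a subset $M'$ of tokens collapse to zero, so the total system collateral value becomes $C^*_1 = C^+_0$ (the value of collateral in CDPs not using tokens of $M'$), while total debt is unchanged: $D^*_1 = D^-_0 + D^+_0$, where $D^-_0$ (resp. $D^+_0$) is the debt of affected (resp. unaffected) CDPs. If the debt ceiling constraint $D^-_0 < \zeta' (D^-_0 + D^+_0)$ holds with $0 \leq \zeta' < 1$, then $C^*_1 / D^*_1 > \gamma(1 - \zeta')$. -/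
/-!
Each unaffected CDP has collateral value exceeding `γ` times its debt, so summing gives
`γ D⁺ < C⁺`. The debt ceiling `D⁻ < ζ' (D⁻ + D⁺)` says exactly that `(1 - ζ') (D⁻ + D⁺) < D⁺`,
hence `γ (1 - ζ') (D⁻ + D⁺) < γ D⁺ < C⁺`, and the crash leaves `C⁺` as the whole collateral.
-/

open Finset

section

variable {K ι : Type*} [Field K] [LinearOrder K] [IsStrictOrderedRing K]

theorem mul_sum_lt_sum_of_lt_div {s : Finset ι} (hs : s.Nonempty) {a d : ι → K} {γ : K}
    (hd : ∀ i ∈ s, 0 < d i) (h : ∀ i ∈ s, γ < a i / d i) :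
    γ * ∑ i ∈ s, d i < ∑ i ∈ s, a i := by
  rw [mul_sum]
  exact sum_lt_sum_of_nonempty hs fun i hi => (lt_div_iff₀ (hd i hi)).1 (h i hi)

theorem mul_one_sub_lt_div_add_of_lt_mul_add {a b C γ ζ : K} (ha : 0 ≤ a) (hb : 0 < b)
    (hγ : 0 < γ) (hC : γ * b < C) (hceil : a < ζ * (a + b)) :
    γ * (1 - ζ) < C / (a + b) := by
  rw [lt_div_iff₀ (by positivity)]
  have hshare : (1 - ζ) * (a + b) < b := by linarith
  calc γ * (1 - ζ) * (a + b) = γ * ((1 - ζ) * (a + b)) := by ring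
    _ < γ * b := mul_lt_mul_of_pos_left hshare hγ
    _ < C := hC

end

theorem sudden_price_drop_general {J T : Type*} [Fintype J]
    (y : J → T) (M' : Set T) [DecidablePred (· ∈ M')]
    (p : T → ℝ) (c : J → ℝ) (D : J → ℝ) (γ ζ' : ℝ)
    (hD : ∀ j, 0 < D j)
    (hγ : 0 < γ)
    (hover : ∀ j, p (y j) * c j / D j > γ)
    (hnonempty : ∃ j, y j ∉ M')
    (hceil : (∑ j ∈ univ.filter (fun j => y j ∈ M'), D j) <
      ζ' * ((∑ j ∈ univ.filter (fun j => y j ∈ M'), D j) +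
            (∑ j ∈ univ.filter (fun j => y j ∉ M'), D j))) :
    (∑ j ∈ univ.filter (fun j => y j ∉ M'), p (y j) * c j) /
      ((∑ j ∈ univ.filter (fun j => y j ∈ M'), D j) +
       (∑ j ∈ univ.filter (fun j => y j ∉ M'), D j)) > γ * (1 - ζ') := by
  obtain ⟨j₀, hj₀⟩ := hnonempty
  have hunaffected : (univ.filter fun j => y j ∉ M').Nonempty := ⟨j₀, by simpa using hj₀⟩
  have hbacked := mul_sum_lt_sum_of_lt_div hunaffected (fun j _ => hD j) (fun j _ => hover j)
  exact mul_one_sub_lt_div_add_of_lt_mul_add (sum_nonneg fun j _ => (hD j).le)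
    (sum_pos (fun j _ => hD j) hunaffected) hγ hbacked hceil

/-- Theorem 1 (sudden crash of tokens): if every CDP is over-collateralized at time 0
and the prices of the tokens in `M'` collapse to zero at time 1, then full backing
holds with threshold `γ * (1 - ζ')`. -/
theorem sudden_price_drop {J T : Type*} [Fintype J] [Nonempty J]
    (y : J → T) (M' : Set T) [DecidablePred (· ∈ M')]
    (p : T → ℝ) (c : J → ℝ) (D : J → ℝ) (γ ζ' : ℝ)
    (hp : ∀ t, 0 ≤ p t) (hc : ∀ j, 0 ≤ c j) (hD : ∀ j, 0 < D j)
    (hγ : 0 < γ) (hζ0 : 0 ≤ ζ') (hζ1 : ζ' < 1)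
    (hover : ∀ j, p (y j) * c j / D j > γ)
    (hnonempty : ∃ j, y j ∉ M')
    (hceil : (∑ j ∈ univ.filter (fun j => y j ∈ M'), D j) <
      ζ' * ((∑ j ∈ univ.filter (fun j => y j ∈ M'), D j) +
            (∑ j ∈ univ.filter (fun j => y j ∉ M'), D j))) :
    (∑ j ∈ univ.filter (fun j => y j ∉ M'), p (y j) * c j) /
      ((∑ j ∈ univ.filter (fun j => y j ∈ M'), D j) +
       (∑ j ∈ univ.filter (fun j => y j ∉ M'), D j)) > γ * (1 - ζ') :=
  sudden_price_drop_general y M' p c D γ ζ' hD hγ hover hnonempty hceil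
end

section
/- Suppose every CDP is over-collateralized at time 0: $p_{y_j,0}\, c_{j,0}/D_{j,0} > \gamma$ for all $j$. Suppose an attacker on a compromised chain creates $h' \geq 0$ unbacked stablecoins against token types in $M'$, so that at time 1 collateral values are unchanged ($C^-_1 = C^-_0$, $C^+_1 = C^+_0$) but affected debt becomes $D^-_1 = D^-_0 + h'$ while $D^+_1 = D^+_0$. If the debt ceiling still holds after the attack, i.e., $D^-_0 + h' < \zeta'(D^+_0 + D^-_0 + h')$ with $0 \leq \zeta' < 1$, then $C^*_1/D^*_1 > \gamma(1-\zeta')$, where $C^*_1 = C^-_1 + C^+_1$ and $D^*_1 = D^-_1 + D^+_1$. -/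
/-!
Summing the over-collateralization inequalities gives total collateral `C > γ · (D⁺ + D⁻)`.
The ceiling says the minted amount is a small share of the new total debt, `h' < ζ' · D₁`,
so the old debt `D⁺ + D⁻ = D₁ - h'` still exceeds `(1 - ζ') · D₁`.
-/

open Finset

theorem mul_sum_lt_sum_of_lt_div_s4 {ι 𝕜 : Type*} [Field 𝕜] [LinearOrder 𝕜] [IsStrictOrderedRing 𝕜]
    {s : Finset ι} (hs : s.Nonempty) {x D : ι → 𝕜} {γ : 𝕜}
    (hD : ∀ j ∈ s, 0 < D j) (h : ∀ j ∈ s, γ < x j / D j) :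
    γ * ∑ j ∈ s, D j < ∑ j ∈ s, x j := by
  rw [mul_sum]
  exact sum_lt_sum_of_nonempty hs fun j hj => (lt_div_iff₀ (hD j hj)).mp (h j hj)

theorem corrupted_chain_general {J T : Type*} [Fintype J] [Nonempty J]
    (y : J → T) (M' : Set T) [DecidablePred (· ∈ M')]
    (p : T → ℝ) (c : J → ℝ) (D : J → ℝ) (γ ζ' h' : ℝ)
    (hD : ∀ j, 0 < D j)
    (hγ : 0 < γ) (hh' : 0 ≤ h')
    (hover : ∀ j, p (y j) * c j / D j > γ)
    (hceil : (∑ j ∈ univ.filter (fun j => y j ∈ M'), D j) + h' <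
      ζ' * ((∑ j ∈ univ.filter (fun j => y j ∉ M'), D j) +
            (∑ j ∈ univ.filter (fun j => y j ∈ M'), D j) + h')) :
    ((∑ j ∈ univ.filter (fun j => y j ∈ M'), p (y j) * c j) +
     (∑ j ∈ univ.filter (fun j => y j ∉ M'), p (y j) * c j)) /
      (((∑ j ∈ univ.filter (fun j => y j ∈ M'), D j) + h') +
       (∑ j ∈ univ.filter (fun j => y j ∉ M'), D j)) > γ * (1 - ζ') := by
  rw [sum_filter_add_sum_filter_not]
  set Dminus := ∑ j ∈ univ.filter (fun j => y j ∈ M'), D j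
  set Dplus := ∑ j ∈ univ.filter (fun j => y j ∉ M'), D j
  have hDtotal : Dminus + Dplus = ∑ j, D j := sum_filter_add_sum_filter_not _ _ _
  have hDpos : 0 < ∑ j, D j := sum_pos (fun j _ => hD j) univ_nonempty
  have hDminus : 0 ≤ Dminus := sum_nonneg fun j _ => (hD j).le
  have hbacked : γ * ∑ j, D j < ∑ j, p (y j) * c j :=
    mul_sum_lt_sum_of_lt_div_s4 univ_nonempty (fun j _ => hD j) (fun j _ => hover j)
  have hold_debt : (1 - ζ') * (Dminus + h' + Dplus) ≤ Dminus + Dplus := by linarith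
  rw [gt_iff_lt, lt_div_iff₀ (by linarith)]
  calc γ * (1 - ζ') * (Dminus + h' + Dplus) ≤ γ * (Dminus + Dplus) := by
        rw [mul_assoc]; exact mul_le_mul_of_nonneg_left hold_debt hγ.le
    _ < ∑ j, p (y j) * c j := hDtotal ▸ hbacked

/-- Theorem 2 (compromised coin chain): if every CDP is over-collateralized at time 0
and an attacker mints `h'` unbacked stablecoins against token types in `M'` such that
the debt ceiling still holds, then full backing holds with threshold `γ * (1 - ζ')`. -/
theorem corrupted_chain {J T : Type*} [Fintype J] [Nonempty J]
    (y : J → T) (M' : Set T) [DecidablePred (· ∈ M')]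
    (p : T → ℝ) (c : J → ℝ) (D : J → ℝ) (γ ζ' h' : ℝ)
    (hp : ∀ t, 0 ≤ p t) (hc : ∀ j, 0 ≤ c j) (hD : ∀ j, 0 < D j)
    (hγ : 0 < γ) (hζ0 : 0 ≤ ζ') (hζ1 : ζ' < 1) (hh' : 0 ≤ h')
    (hover : ∀ j, p (y j) * c j / D j > γ)
    (hnonempty : ∃ j, y j ∉ M')
    (hceil : (∑ j ∈ univ.filter (fun j => y j ∈ M'), D j) + h' <
      ζ' * ((∑ j ∈ univ.filter (fun j => y j ∉ M'), D j) +
            (∑ j ∈ univ.filter (fun j => y j ∈ M'), D j) + h')) :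
    ((∑ j ∈ univ.filter (fun j => y j ∈ M'), p (y j) * c j) +
     (∑ j ∈ univ.filter (fun j => y j ∉ M'), p (y j) * c j)) /
      (((∑ j ∈ univ.filter (fun j => y j ∈ M'), D j) + h') +
       (∑ j ∈ univ.filter (fun j => y j ∉ M'), D j)) > γ * (1 - ζ') :=
  corrupted_chain_general y M' p c D γ ζ' h' hD hγ hh' hover hceil
end
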